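/- arXiv:1602.04935 — 4 statements merged into one kernel-verified Lean document; each statement's English description precedes it below -/
import Mathlib

section
/- Let A and B be closed subsets of a Euclidean space E, let x̄ ∈ A ∩ B, and define the set-valued mapping F : E ⇉ E × E by F(x) = (A − x) × (B − x), where E × E carries the maximum norm ‖(u₁,u₂)‖ = max{‖u₁‖, ‖u₂‖}. Then {A,B} is subtransversal at x̄ if and only if F is metrically subregular at x̄ for (0,0); moreover sr[A,B](x̄) = sr[F](x̄|(0,0)). Furthermore, F is strongly metrically subregular at x̄ for (0,0) if and only if {A,B} is strongly subtransversal at x̄. -/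
open Metric Set Pointwise Filter ENNReal
open scoped RealInnerProductSpace

section Defs

variable {E : Type*} [NormedAddCommGroup E] [InnerProductSpace ℝ E] [FiniteDimensional ℝ E]

/-- The projector onto a set: `P_A(x) = {a ∈ A : ‖x − a‖ = d(x,A)}`. -/
def projSet (A : Set E) (x : E) : Set E := {a | a ∈ A ∧ ‖x - a‖ = Metric.infDist x A}

/-- The proximal normal cone `N^p_A(a) = {λ(x−a) : λ ≥ 0, a ∈ P_A(x)}`. -/
def proxNC (A : Set E) (a : E) : Set E :=
  {v | ∃ lam : ℝ, 0 ≤ lam ∧ ∃ x : E, a ∈ projSet A x ∧ v = lam • (x - a)}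

/-- The restricted (`A'`-)proximal normal cone
`N^p_{A|A'}(a) = {λ(x−a) : λ ≥ 0, x ∈ A', a ∈ P_A(x)}`. -/
def proxNCRes (A A' : Set E) (a : E) : Set E :=
  {v | ∃ lam : ℝ, 0 ≤ lam ∧ ∃ x ∈ A', a ∈ projSet A x ∧ v = lam • (x - a)}

/-- The limiting normal cone: limits of proximal normals at points of `A` converging to `a`. -/
def limNC (A : Set E) (a : E) : Set E :=
  {v | ∃ x w : ℕ → E, (∀ k, x k ∈ A) ∧ (∀ k, w k ∈ proxNC A (x k)) ∧
    Filter.Tendsto x Filter.atTop (nhds a) ∧ Filter.Tendsto w Filter.atTop (nhds v)}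

/-- The Fréchet normal cone (via the standard ε-δ reformulation of `limsup ≤ 0`). -/
def frechetNC (A : Set E) (a : E) : Set E :=
  {v | ∀ ε > 0, ∃ δ > 0, ∀ x ∈ A, ‖x - a‖ < δ → ⟪v, x - a⟫ ≤ ε * ‖x - a‖}

/-- `A` is elementally subregular of order `σ` relative to `B` for `(a,v)` with constant `ε`
and neighborhood `U` (of the reference point). -/
def ElemSubregOn (A B : Set E) (a v : E) (ε σ : ℝ) (U : Set E) : Prop :=
  ∀ b ∈ B ∩ U, ∀ bA ∈ projSet A b,
    ⟪v - (b - bA), bA - a⟫ ≤ ε * ‖v - (b - bA)‖ ^ (1 + σ) * ‖bA - a‖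

/-- `A` is `σ`-Hölder regular relative to `B` (first argument is the projected set) at points of
`B ∩ W` with constant `c` and neighborhood `W`:
`B_{(1+c)‖b−b_A‖}(b) ∩ A ∩ {x ∈ P_B⁻¹(b) : ⟨b−b_A, x−b_A⟩ > √c ‖b−b_A‖^{σ+1} ‖x−b_A‖} = ∅`. -/
def HoelderRegOn (A B : Set E) (σ c : ℝ) (W : Set E) : Prop :=
  ∀ b ∈ B ∩ W, ∀ bA ∈ projSet A b ∩ W,
    ∀ x ∈ Metric.ball b ((1 + c) * ‖b - bA‖) ∩ A, b ∈ projSet B x →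
      ⟪b - bA, x - bA⟫ ≤ Real.sqrt c * ‖b - bA‖ ^ (σ + 1) * ‖x - bA‖

/-- `A` is super-regular at `x̄`. -/
def SuperRegular (A : Set E) (xb : E) : Prop :=
  ∀ ε > 0, ∃ δ > 0, ∀ x ∈ A ∩ Metric.ball xb δ, ∀ z ∈ Metric.ball xb δ, ∀ zA ∈ projSet A z,
    ⟪z - zA, x - zA⟫ ≤ ε * ‖z - zA‖ * ‖x - zA‖

/-- Subtransversality with constants `α`, `δ`:
`(A + (αρ)𝔹) ∩ (B + (αρ)𝔹) ∩ B_δ(x̄) ⊆ (A ∩ B) + ρ𝔹` for all `ρ ∈ (0,δ)`. -/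
def SubtransversalWith (A B : Set E) (xb : E) (α δ : ℝ) : Prop :=
  ∀ ρ ∈ Set.Ioo (0 : ℝ) δ,
    (A + Metric.ball 0 (α * ρ)) ∩ (B + Metric.ball 0 (α * ρ)) ∩ Metric.ball xb δ ⊆
      (A ∩ B) + Metric.ball 0 ρ

/-- The collection `{A,B}` is subtransversal at `x̄`. -/
def Subtransversal (A B : Set E) (xb : E) : Prop :=
  ∃ α > 0, ∃ δ > 0, SubtransversalWith A B xb α δ

/-- `sr[A,B](x̄)`: the (possibly infinite) supremum of admissible subtransversality constants. -/
noncomputable def srColl (A B : Set E) (xb : E) : ℝ≥0∞ :=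
  ⨆ α ∈ {α : ℝ | 0 < α ∧ ∃ δ > 0, SubtransversalWith A B xb α δ}, ENNReal.ofReal α

/-- Transversality with constants `α`, `δ`:
`(A − a − x₁) ∩ (B − b − x₂) ∩ (ρ𝔹) ≠ ∅` for all `ρ ∈ (0,δ)`, `a ∈ A ∩ B_δ(x̄)`,
`b ∈ B ∩ B_δ(x̄)` and `max{‖x₁‖,‖x₂‖} < αρ`. -/
def TransversalWith (A B : Set E) (xb : E) (α δ : ℝ) : Prop :=
  ∀ ρ ∈ Set.Ioo (0 : ℝ) δ, ∀ a ∈ A ∩ Metric.ball xb δ, ∀ b ∈ B ∩ Metric.ball xb δ,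
    ∀ x₁ x₂ : E, max ‖x₁‖ ‖x₂‖ < α * ρ →
      (((fun z => z - a - x₁) '' A) ∩ ((fun z => z - b - x₂) '' B) ∩
        Metric.ball 0 ρ).Nonempty

/-- The collection `{A,B}` is transversal at `x̄`. -/
def Transversal (A B : Set E) (xb : E) : Prop :=
  ∃ α > 0, ∃ δ > 0, TransversalWith A B xb α δ

/-- `rg[A,B](x̄)`: the (possibly infinite) supremum of admissible transversality constants. -/
noncomputable def rgColl (A B : Set E) (xb : E) : ℝ≥0∞ :=
  ⨆ α ∈ {α : ℝ | 0 < α ∧ ∃ δ > 0, TransversalWith A B xb α δ}, ENNReal.ofReal α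

end Defs

section Maps

variable {X Y : Type*} [PseudoMetricSpace X] [PseudoMetricSpace Y]

/-- Metric subregularity of the set-valued mapping `F` at `x̄` for `ȳ` with constant `α`
(distances to possibly empty sets are taken in `ℝ≥0∞`, so that `d(x,∅) = ∞`). -/
def MetrSubregWith (F : X → Set Y) (xb : X) (yb : Y) (α : ℝ) : Prop :=
  ∃ δ > 0, ∀ x ∈ Metric.ball xb δ,
    ENNReal.ofReal α * EMetric.infEdist x {x' | yb ∈ F x'} ≤ EMetric.infEdist yb (F x)

/-- `sr[F](x̄|ȳ)`: the supremum of admissible metric subregularity constants. -/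
noncomputable def srMap (F : X → Set Y) (xb : X) (yb : Y) : ℝ≥0∞ :=
  ⨆ α ∈ {α : ℝ | 0 < α ∧ MetrSubregWith F xb yb α}, ENNReal.ofReal α

/-- Metric regularity of the set-valued mapping `F` at `x̄` for `ȳ` with constant `α`. -/
def MetrRegWith (F : X → Set Y) (xb : X) (yb : Y) (α : ℝ) : Prop :=
  ∃ δ > 0, ∀ x ∈ Metric.ball xb δ, ∀ y ∈ Metric.ball yb δ,
    ENNReal.ofReal α * EMetric.infEdist x {x' | y ∈ F x'} ≤ EMetric.infEdist y (F x)

/-- `r[F](x̄|ȳ)`: the supremum of admissible metric regularity constants. -/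
noncomputable def rMap (F : X → Set Y) (xb : X) (yb : Y) : ℝ≥0∞ :=
  ⨆ α ∈ {α : ℝ | 0 < α ∧ MetrRegWith F xb yb α}, ENNReal.ofReal α

/-- `x` is an isolated point of `S`. -/
def IsIsolatedIn (x : X) (S : Set X) : Prop :=
  x ∈ S ∧ ∃ ε > 0, ∀ y ∈ S ∩ Metric.ball x ε, y = x

end Maps

section Statements

variable {E : Type*} [NormedAddCommGroup E] [InnerProductSpace ℝ E] [FiniteDimensional ℝ E]

lemma infEdist_prod_eq {X Y : Type*} [PseudoEMetricSpace X] [PseudoEMetricSpace Y]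
    (a : X) (b : Y) (s : Set X) (t : Set Y) :
    EMetric.infEdist (a, b) (s ×ˢ t) = max (EMetric.infEdist a s) (EMetric.infEdist b t) := by
  apply le_antisymm
  · by_contra h
    push_neg at h
    obtain ⟨c, hc, hc'⟩ := EMetric.infEdist_lt_iff.mp ((le_max_left _ _).trans_lt h)
    obtain ⟨d, hd, hd'⟩ := EMetric.infEdist_lt_iff.mp ((le_max_right _ _).trans_lt h)
    have h1 := EMetric.infEdist_le_edist_of_mem (Set.mk_mem_prod hc hd) (x := (a, b))
    rw [Prod.edist_eq] at h1
    exact absurd (h1.trans_lt (max_lt hc' hd')) (lt_irrefl _)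
  · refine max_le ?_ ?_ <;> simp only [EMetric.infEdist] <;> rw [EMetric.le_infEdist] <;> rintro ⟨c, d⟩ ⟨hc, hd⟩
    · exact (EMetric.infEdist_le_edist_of_mem hc).trans
        (by rw [Prod.edist_eq]; exact le_max_left _ _)
    · exact (EMetric.infEdist_le_edist_of_mem hd).trans
        (by rw [Prod.edist_eq]; exact le_max_right _ _)

lemma mem_add_ball_iff (S : Set E) (x : E) (r : ℝ) :
    x ∈ S + Metric.ball 0 r ↔ EMetric.infEdist x S < ENNReal.ofReal r := by
  constructor
  · rintro ⟨s, hs, b, hb, rfl⟩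
    refine (EMetric.infEdist_le_edist_of_mem hs).trans_lt ?_
    rw [edist_lt_ofReal]
    simpa [dist_eq_norm] using mem_ball_zero_iff.mp hb
  · intro h
    obtain ⟨s, hs, hlt⟩ := EMetric.infEdist_lt_iff.mp h
    rw [edist_lt_ofReal, dist_eq_norm] at hlt
    exact ⟨s, hs, x - s, mem_ball_zero_iff.mpr hlt, by simp⟩

lemma inv_set_eq (A B : Set E) :
    {x : E | ((0 : E), (0 : E)) ∈ ((· - x) '' A) ×ˢ ((· - x) '' B)} = A ∩ B := by
  ext x
  simp [Set.mem_prod, sub_eq_zero, eq_comm]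

lemma infEdist_zero_image (A : Set E) (x : E) :
    EMetric.infEdist (0 : E) ((· - x) '' A) = EMetric.infEdist x A := by
  have hiso : Isometry (fun a : E => a - x) :=
    Isometry.of_dist_eq fun a b => by simp [dist_eq_norm, sub_sub_sub_cancel_right]
  have := EMetric.infEdist_image hiso (x := x) (t := A)
  simpa [EMetric.infEdist] using this

lemma key_iff (A B : Set E) (xb : E) (hxb : xb ∈ A ∩ B) {α : ℝ} (hα : 0 < α) :
    (∃ δ > 0, SubtransversalWith A B xb α δ) ↔
      MetrSubregWith (fun x : E => ((· - x) '' A) ×ˢ ((· - x) '' B)) xb ((0 : E), (0 : E)) α := by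
  have hrw : ∀ x : E, EMetric.infEdist ((0 : E), (0 : E)) (((· - x) '' A) ×ˢ ((· - x) '' B)) =
      max (EMetric.infEdist x A) (EMetric.infEdist x B) := fun x => by
    rw [infEdist_prod_eq, infEdist_zero_image, infEdist_zero_image]
  constructor
  · rintro ⟨δ, hδ, hsub⟩
    refine ⟨δ, hδ, fun x hx => ?_⟩
    rw [inv_set_eq, hrw]
    set m := max (EMetric.infEdist x A) (EMetric.infEdist x B) with hm
    set d := EMetric.infEdist x (A ∩ B) with hd
    have hdlt : d < ENNReal.ofReal δ := by
      refine (EMetric.infEdist_le_edist_of_mem hxb).trans_lt ?_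
      rw [edist_lt_ofReal]
      exact mem_ball.mp hx
    by_contra hcon
    push_neg at hcon
    have hdtop : d ≠ ⊤ := (hdlt.trans_le le_top).ne
    set dr := d.toReal with hdr
    have hdval : d = ENNReal.ofReal dr := (ENNReal.ofReal_toReal hdtop).symm
    have hdrδ : dr < δ := by
      rw [hdval, ENNReal.ofReal_lt_ofReal_iff hδ] at hdlt
      exact hdlt
    have hmlt : m < ENNReal.ofReal (α * dr) := by
      rwa [hdval, ← ENNReal.ofReal_mul hα.le] at hcon
    have hmtop : m ≠ ⊤ := (hmlt.trans_le le_top).ne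
    set t := m.toReal with ht
    have hmval : m = ENNReal.ofReal t := (ENNReal.ofReal_toReal hmtop).symm
    have htlt : t < α * dr := by
      rw [hmval, ENNReal.ofReal_lt_ofReal_iff_of_nonneg ENNReal.toReal_nonneg] at hmlt
      exact hmlt
    have ht0 : 0 ≤ t := ENNReal.toReal_nonneg
    have hta : t / α < dr := (div_lt_iff₀ hα).mpr (by linarith [mul_comm α dr])
    set ρ := (t / α + dr) / 2 with hρ
    have hρ1 : t / α < ρ := by rw [hρ]; linarith
    have hρ2 : ρ < dr := by rw [hρ]; linarith
    have hρ0 : 0 < ρ := lt_of_le_of_lt (div_nonneg ht0 hα.le) hρ1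
    have hρδ : ρ < δ := hρ2.trans hdrδ
    have htρ : t < α * ρ := by
      have := (div_lt_iff₀ hα).mp hρ1
      linarith [mul_comm ρ α]
    have hmem : x ∈ (A + Metric.ball 0 (α * ρ)) ∩ (B + Metric.ball 0 (α * ρ)) ∩
        Metric.ball xb δ := by
      refine ⟨⟨?_, ?_⟩, hx⟩
      · rw [mem_add_ball_iff]
        exact ((le_max_left _ _).trans hmval.le).trans_lt (by
          exact (ENNReal.ofReal_lt_ofReal_iff (by positivity)).mpr htρ)
      · rw [mem_add_ball_iff]
        exact ((le_max_right _ _).trans hmval.le).trans_lt (by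
          exact (ENNReal.ofReal_lt_ofReal_iff (by positivity)).mpr htρ)
    have := hsub ρ ⟨hρ0, hρδ⟩ hmem
    rw [mem_add_ball_iff, ← hd, hdval, ENNReal.ofReal_lt_ofReal_iff hρ0] at this
    exact absurd this (not_lt.mpr hρ2.le)
  · rintro ⟨δ, hδ, hreg⟩
    refine ⟨δ, hδ, fun ρ hρ x hx => ?_⟩
    obtain ⟨⟨hxA, hxB⟩, hxb'⟩ := hx
    rw [mem_add_ball_iff] at hxA hxB
    have h := hreg x hxb'
    rw [inv_set_eq, hrw] at h
    have hlt : ENNReal.ofReal α * EMetric.infEdist x (A ∩ B) <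
        ENNReal.ofReal α * ENNReal.ofReal ρ := by
      refine h.trans_lt ?_
      rw [← ENNReal.ofReal_mul hα.le]
      exact max_lt hxA hxB
    rw [ENNReal.mul_lt_mul_iff_right (by simpa using hα) ENNReal.ofReal_ne_top] at hlt
    rw [mem_add_ball_iff]
    exact hlt

theorem stmt15 (A B : Set E) (hA : IsClosed A) (hB : IsClosed B) (xb : E) (hxb : xb ∈ A ∩ B) :
    (Subtransversal A B xb ↔ ∃ α > (0 : ℝ),
        MetrSubregWith (fun x : E => ((· - x) '' A) ×ˢ ((· - x) '' B)) xb ((0 : E), (0 : E)) α) ∧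
    srColl A B xb =
      srMap (fun x : E => ((· - x) '' A) ×ˢ ((· - x) '' B)) xb ((0 : E), (0 : E)) ∧
    ((∃ α > (0 : ℝ),
        MetrSubregWith (fun x : E => ((· - x) '' A) ×ˢ ((· - x) '' B)) xb ((0 : E), (0 : E)) α) ∧
      IsIsolatedIn xb {x : E | ((0 : E), (0 : E)) ∈ ((· - x) '' A) ×ˢ ((· - x) '' B)} ↔
        Subtransversal A B xb ∧ IsIsolatedIn xb (A ∩ B)) := by
  have hiff : Subtransversal A B xb ↔ ∃ α > (0 : ℝ),
      MetrSubregWith (fun x : E => ((· - x) '' A) ×ˢ ((· - x) '' B)) xb ((0 : E), (0 : E)) α :=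
    exists_congr fun α => and_congr_right fun hα => key_iff A B xb hxb hα
  refine ⟨hiff, ?_, ?_⟩
  · have hset : {α : ℝ | 0 < α ∧ ∃ δ > 0, SubtransversalWith A B xb α δ} =
        {α : ℝ | 0 < α ∧ MetrSubregWith
          (fun x : E => ((· - x) '' A) ×ˢ ((· - x) '' B)) xb ((0 : E), (0 : E)) α} := by
      ext α
      exact and_congr_right fun hα => key_iff A B xb hxb hα
    unfold srColl srMap
    rw [hset]
  · rw [inv_set_eq]
    exact and_congr_left' hiff.symm

end Statements
end

section
/- Let A and B be closed subsets of a Euclidean space E, let x̄ ∈ A ∩ B, and define the set-valued mapping G : E × E ⇉ E by G(x₁,x₂) = {x₁ − x₂} if x₁ ∈ A and x₂ ∈ B, and G(x₁,x₂) = ∅ otherwise, where E × E carries the Euclidean norm ‖(u₁,u₂)‖ = (‖u₁‖² + ‖u₂‖²)^{1/2}. Then {A,B} is subtransversal at x̄ if and only if G is metrically subregular at (x̄,x̄) for 0. Moreover, writing sr = sr[A,B](x̄), one has √(2/(1 + sr^{-2})) ≤ sr[G]((x̄,x̄)|0) ≤ 2/[sr^{-1} − 1]₊, where [t]₊ = max{t,0}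 and the upper bound is interpreted as +∞ when sr ≥ 1. -/
set_option maxHeartbeats 1600000

open Metric Set Pointwise Filter ENNReal
open scoped RealInnerProductSpace

section Statements

variable {E : Type*} [NormedAddCommGroup E] [InnerProductSpace ℝ E] [FiniteDimensional ℝ E]

/-- The error-bound property: `α d(x, A∩B) ≤ max (d(x,A)) (d(x,B))` near `xb`. -/
private def EB (A B : Set E) (xb : E) (α δ : ℝ) : Prop :=
  ∀ x ∈ Metric.ball xb δ,
    α * Metric.infDist x (A ∩ B) ≤ max (Metric.infDist x A) (Metric.infDist x B)

private def Gmap (A B : Set E) (p : WithLp 2 (E × E)) : Set E :=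
  {y : E | (WithLp.equiv 2 (E × E) p).1 ∈ A ∧ (WithLp.equiv 2 (E × E) p).2 ∈ B ∧
    y = (WithLp.equiv 2 (E × E) p).1 - (WithLp.equiv 2 (E × E) p).2}

private lemma gmap_inv (A B : Set E) :
    {x' : WithLp 2 (E × E) | (0:E) ∈ Gmap A B x'} =
      {x' : WithLp 2 (E × E) | x'.fst ∈ A ∧ x'.snd ∈ B ∧ x'.fst = x'.snd} := by
  ext q
  simp only [Gmap, Set.mem_setOf_eq, WithLp.equiv_apply, WithLp.ofLp_fst, WithLp.ofLp_snd]
  constructor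
  · rintro ⟨h1, h2, h3⟩
    exact ⟨h1, h2, by rw [← sub_eq_zero]; exact h3.symm⟩
  · rintro ⟨h1, h2, h3⟩
    exact ⟨h1, h2, by rw [eq_comm, sub_eq_zero]; exact h3⟩

private lemma dist_fst_le_dist (p q : WithLp 2 (E × E)) : dist p.fst q.fst ≤ dist p q := by
  rw [WithLp.prod_dist_eq_of_L2]
  calc dist p.fst q.fst = Real.sqrt (dist p.fst q.fst ^ 2) := (Real.sqrt_sq dist_nonneg).symm
    _ ≤ Real.sqrt (dist p.fst q.fst ^ 2 + dist p.snd q.snd ^ 2) :=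
        Real.sqrt_le_sqrt (by nlinarith [sq_nonneg (dist p.snd q.snd)])

private lemma dist_snd_le_dist (p q : WithLp 2 (E × E)) : dist p.snd q.snd ≤ dist p q := by
  rw [WithLp.prod_dist_eq_of_L2]
  calc dist p.snd q.snd = Real.sqrt (dist p.snd q.snd ^ 2) := (Real.sqrt_sq dist_nonneg).symm
    _ ≤ Real.sqrt (dist p.fst q.fst ^ 2 + dist p.snd q.snd ^ 2) :=
        Real.sqrt_le_sqrt (by nlinarith [sq_nonneg (dist p.fst q.fst)])

/-- Subtransversality with constants implies the error bound with the same constant. -/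
private lemma subtransWith_to_EB {A B : Set E} {xb : E} (hxb : xb ∈ A ∩ B) {α δ : ℝ}
    (hα : 0 < α) (h : SubtransversalWith A B xb α δ) :
    EB A B xb α (min δ (α * δ)) := by
  intro x hx
  rw [Metric.mem_ball] at hx
  set m := max (Metric.infDist x A) (Metric.infDist x B) with hm
  have hm0 : 0 ≤ m := le_max_of_le_left Metric.infDist_nonneg
  have hmA : Metric.infDist x A ≤ m := le_max_left _ _
  have hmB : Metric.infDist x B ≤ m := le_max_right _ _
  have hms : m < α * δ := by
    have h1 : Metric.infDist x A ≤ dist x xb := Metric.infDist_le_dist_of_mem hxb.1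
    have h2 : Metric.infDist x B ≤ dist x xb := Metric.infDist_le_dist_of_mem hxb.2
    have h3 : dist x xb < α * δ := lt_of_lt_of_le hx (min_le_right _ _)
    exact lt_of_le_of_lt (max_le h1 h2) h3
  have hδ : 0 < δ := by
    rcases le_or_gt δ 0 with h' | h'
    · exfalso; nlinarith
    · exact h'
  have key : ∀ ρ : ℝ, m / α < ρ → ρ < δ → Metric.infDist x (A ∩ B) ≤ ρ := by
    intro ρ h1 h2
    have hρ0 : 0 < ρ := lt_of_le_of_lt (div_nonneg hm0 hα.le) h1
    have hmαρ : m < α * ρ := by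
      rw [div_lt_iff₀ hα] at h1; linarith [h1]
    have hxA : x ∈ A + Metric.ball 0 (α * ρ) := by
      obtain ⟨a, ha, hd⟩ := (Metric.infDist_lt_iff ⟨xb, hxb.1⟩).1 (lt_of_le_of_lt hmA hmαρ)
      refine Set.mem_add.2 ⟨a, ha, x - a, ?_, by abel⟩
      rw [mem_ball_zero_iff, ← dist_eq_norm]
      exact hd
    have hxB : x ∈ B + Metric.ball 0 (α * ρ) := by
      obtain ⟨b, hb, hd⟩ := (Metric.infDist_lt_iff ⟨xb, hxb.2⟩).1 (lt_of_le_of_lt hmB hmαρ)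
      refine Set.mem_add.2 ⟨b, hb, x - b, ?_, by abel⟩
      rw [mem_ball_zero_iff, ← dist_eq_norm]
      exact hd
    have hmem : x ∈ (A + Metric.ball 0 (α * ρ)) ∩ (B + Metric.ball 0 (α * ρ)) ∩
        Metric.ball xb δ :=
      ⟨⟨hxA, hxB⟩, Metric.mem_ball.2 (lt_of_lt_of_le hx (min_le_left _ _))⟩
    obtain ⟨z, hz, v, hv, hvz⟩ := Set.mem_add.1 (h ρ ⟨hρ0, h2⟩ hmem)
    rw [mem_ball_zero_iff] at hv
    calc Metric.infDist x (A ∩ B) ≤ dist x z := Metric.infDist_le_dist_of_mem hz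
      _ ≤ ρ := by rw [dist_eq_norm, show x - z = v by rw [← hvz]; abel]; exact hv.le
  by_contra hcon
  push_neg at hcon
  set d := Metric.infDist x (A ∩ B) with hd
  have h1 : m / α < d := by rw [div_lt_iff₀ hα]; nlinarith
  have h2 : m / α < δ := by rw [div_lt_iff₀ hα]; nlinarith
  set ρ := (m / α + min d δ) / 2 with hρ
  have hmin : m / α < min d δ := lt_min h1 h2
  have hk := key ρ (by simp only [hρ]; linarith) (by
    have : min d δ ≤ δ := min_le_right _ _
    simp only [hρ]; linarith)
  have : ρ < d := by
    have : min d δ ≤ d := min_le_left _ _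
    simp only [hρ]; linarith
  linarith

/-- The error bound implies subtransversality with the same constants. -/
private lemma EB_to_subtransWith {A B : Set E} {xb : E} (hxb : xb ∈ A ∩ B) {α δ : ℝ}
    (hα : 0 < α) (h : EB A B xb α δ) : SubtransversalWith A B xb α δ := by
  rintro ρ ⟨hρ0, hρδ⟩ x ⟨⟨hxA, hxB⟩, hxδ⟩
  obtain ⟨a, ha, v, hv, hav⟩ := Set.mem_add.1 hxA
  obtain ⟨b, hb, w, hw, hbw⟩ := Set.mem_add.1 hxB
  rw [mem_ball_zero_iff] at hv hw
  have hdA : Metric.infDist x A < α * ρ := by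
    calc Metric.infDist x A ≤ dist x a := Metric.infDist_le_dist_of_mem ha
      _ = ‖v‖ := by rw [dist_eq_norm, show x - a = v by rw [← hav]; abel]
      _ < α * ρ := hv
  have hdB : Metric.infDist x B < α * ρ := by
    calc Metric.infDist x B ≤ dist x b := Metric.infDist_le_dist_of_mem hb
      _ = ‖w‖ := by rw [dist_eq_norm, show x - b = w by rw [← hbw]; abel]
      _ < α * ρ := hw
  have hEB := h x hxδ
  have hd : Metric.infDist x (A ∩ B) < ρ := by
    have hmax : max (Metric.infDist x A) (Metric.infDist x B) < α * ρ := max_lt hdA hdB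
    nlinarith [lt_of_le_of_lt hEB hmax]
  obtain ⟨z, hz, hdz⟩ := (Metric.infDist_lt_iff ⟨xb, hxb⟩).1 hd
  refine Set.mem_add.2 ⟨z, hz, x - z, ?_, by abel⟩
  rw [mem_ball_zero_iff, ← dist_eq_norm]
  exact hdz

/-- Error bound implies metric subregularity of `G` with constant `√(2/(1+α⁻²))`. -/
private lemma EB_to_subreg {A B : Set E} (hAB : IsClosed (A ∩ B)) {xb : E} (hxb : xb ∈ A ∩ B)
    {α δ : ℝ} (hα : 0 < α) (hδ : 0 < δ) (h : EB A B xb α δ) :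
    MetrSubregWith (Gmap A B) ((WithLp.equiv 2 (E × E)).symm (xb, xb)) (0 : E)
      (Real.sqrt (2 / (1 + α⁻¹ ^ 2))) := by
  set c := Real.sqrt (2 / (1 + α⁻¹ ^ 2)) with hc
  have hden : (0:ℝ) < 1 + α⁻¹ ^ 2 := by positivity
  have hcpos : 0 < c := Real.sqrt_pos.2 (by positivity)
  have hc2 : c ^ 2 = 2 / (1 + α⁻¹ ^ 2) := Real.sq_sqrt (by positivity)
  refine ⟨δ, hδ, fun p hp => ?_⟩
  by_cases hpAB : p.fst ∈ A ∧ p.snd ∈ B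
  swap
  · have hempty : Gmap A B p = ∅ := by
      ext y
      simp only [Gmap, Set.mem_setOf_eq, WithLp.equiv_apply, WithLp.ofLp_fst, WithLp.ofLp_snd, Set.mem_empty_iff_false,
        iff_false]
      rintro ⟨h1, h2, -⟩
      exact hpAB ⟨h1, h2⟩
    rw [hempty]
    simp [EMetric.infEdist]
  obtain ⟨hx1, hx2⟩ := hpAB
  set x₁ := p.fst with hx₁
  set x₂ := p.snd with hx₂
  set u := x₁ - x₂ with hu
  have hG : Gmap A B p = {u} := by
    ext y
    simp only [Gmap, Set.mem_setOf_eq, WithLp.equiv_apply, WithLp.ofLp_fst, WithLp.ofLp_snd, Set.mem_singleton_iff]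
    exact ⟨fun ⟨_, _, h3⟩ => h3, fun h3 => ⟨hx1, hx2, h3⟩⟩
  rw [hG]
  have hRHS : EMetric.infEdist (0:E) ({u} : Set E) = ENNReal.ofReal ‖u‖ := by
    rw [EMetric.infEdist, Metric.infEDist_singleton, edist_dist, dist_zero_left]
  rw [hRHS]
  -- the midpoint
  set xm : E := (2:ℝ)⁻¹ • (x₁ + x₂) with hxm
  have hxmball : xm ∈ Metric.ball xb δ := by
    rw [Metric.mem_ball, dist_eq_norm]
    have hrepr : xm - xb = (2:ℝ)⁻¹ • ((x₁ - xb) + (x₂ - xb)) := by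
      rw [hxm]; module
    have h1 : ‖x₁ - xb‖ ≤ dist p ((WithLp.equiv 2 (E × E)).symm (xb, xb)) := by
      have := dist_fst_le_dist p ((WithLp.equiv 2 (E × E)).symm (xb, xb))
      rwa [WithLp.equiv_symm_apply, WithLp.toLp_fst, dist_eq_norm] at this
    have h2 : ‖x₂ - xb‖ ≤ dist p ((WithLp.equiv 2 (E × E)).symm (xb, xb)) := by
      have := dist_snd_le_dist p ((WithLp.equiv 2 (E × E)).symm (xb, xb))
      rwa [WithLp.equiv_symm_apply, WithLp.toLp_snd, dist_eq_norm] at this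
    rw [Metric.mem_ball] at hp
    calc ‖xm - xb‖ = (2:ℝ)⁻¹ * ‖(x₁ - xb) + (x₂ - xb)‖ := by
          rw [hrepr, norm_smul]; simp
      _ ≤ (2:ℝ)⁻¹ * (‖x₁ - xb‖ + ‖x₂ - xb‖) := by
          have := norm_add_le (x₁ - xb) (x₂ - xb); nlinarith
      _ < δ := by nlinarith
  have hmaxle : max (Metric.infDist xm A) (Metric.infDist xm B) ≤ ‖u‖ / 2 := by
    have e1 : xm - x₁ = (2:ℝ)⁻¹ • (x₂ - x₁) := by rw [hxm]; module
    have e2 : xm - x₂ = (2:ℝ)⁻¹ • (x₁ - x₂) := by rw [hxm]; module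
    have d1 : dist xm x₁ = ‖u‖ / 2 := by
      rw [dist_eq_norm, e1, norm_smul, hu, ← norm_neg (x₂ - x₁)]
      simp [neg_sub]; ring
    have d2 : dist xm x₂ = ‖u‖ / 2 := by
      rw [dist_eq_norm, e2, norm_smul, hu]
      simp; ring
    refine max_le ?_ ?_
    · calc Metric.infDist xm A ≤ dist xm x₁ := Metric.infDist_le_dist_of_mem hx1
        _ = ‖u‖ / 2 := d1
    · calc Metric.infDist xm B ≤ dist xm x₂ := Metric.infDist_le_dist_of_mem hx2
        _ = ‖u‖ / 2 := d2
  have hEB := h xm hxmball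
  have hdle : Metric.infDist xm (A ∩ B) ≤ ‖u‖ / (2 * α) := by
    rw [le_div_iff₀ (by positivity)]
    nlinarith [le_trans hEB hmaxle]
  obtain ⟨z, hz, hzd⟩ := hAB.exists_infDist_eq_dist ⟨xb, hxb⟩ xm
  -- the diagonal point
  set q : WithLp 2 (E × E) := (WithLp.equiv 2 (E × E)).symm (z, z) with hq
  have hqS : q ∈ {x' : WithLp 2 (E × E) | (0:E) ∈ Gmap A B x'} := by
    rw [gmap_inv]
    refine ⟨?_, ?_, rfl⟩ <;> rw [hq]
    · rw [WithLp.equiv_symm_apply, WithLp.toLp_fst]; exact hz.1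
    · rw [WithLp.equiv_symm_apply, WithLp.toLp_snd]; exact hz.2
  have hdistq : dist p q ≤ ‖u‖ / c := by
    rw [WithLp.prod_dist_eq_of_L2]
    have hq1 : q.fst = z := by rw [hq, WithLp.equiv_symm_apply, WithLp.toLp_fst]
    have hq2 : q.snd = z := by rw [hq, WithLp.equiv_symm_apply, WithLp.toLp_snd]
    rw [hq1, hq2]
    have hpar := parallelogram_law_with_norm ℝ (x₁ - z) (x₂ - z)
    have hsum : (x₁ - z) + (x₂ - z) = (2:ℝ) • (xm - z) := by rw [hxm]; module
    have hdiff : (x₁ - z) - (x₂ - z) = u := by rw [hu]; abel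
    rw [hsum, hdiff, norm_smul] at hpar
    have hnorm2 : ‖(2:ℝ)‖ = 2 := by norm_num
    rw [hnorm2] at hpar
    have hdm : ‖xm - z‖ = Metric.infDist xm (A ∩ B) := by
      rw [hzd, dist_eq_norm]
    have hkey : dist x₁ z ^ 2 + dist x₂ z ^ 2 ≤ (‖u‖ / c) ^ 2 := by
      rw [dist_eq_norm, dist_eq_norm]
      have hd2 : ‖xm - z‖ ≤ ‖u‖ / (2 * α) := by rw [hdm]; exact hdle
      have hα2 : (0:ℝ) < α ^ 2 := by positivity
      have hd2' : 4 * α ^ 2 * ‖xm - z‖ ^ 2 ≤ ‖u‖ ^ 2 := by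
        rw [le_div_iff₀ (by positivity)] at hd2
        nlinarith [mul_self_le_mul_self (mul_nonneg (norm_nonneg (xm - z)) (by linarith : (0:ℝ) ≤ 2 * α)) hd2]
      have hval : (‖u‖ / c) ^ 2 = ‖u‖ ^ 2 * (α ^ 2 + 1) / (2 * α ^ 2) := by
        rw [div_pow, hc2]
        field_simp
      rw [hval, le_div_iff₀ (by positivity)]
      have hpar2 : (‖x₁ - z‖ ^ 2 + ‖x₂ - z‖ ^ 2) * (2 * α ^ 2) =
          α ^ 2 * (4 * ‖xm - z‖ ^ 2 + ‖u‖ ^ 2) := by linear_combination (-(α ^ 2)) * hpar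
      nlinarith [hd2', hα2, hpar2]
    calc Real.sqrt (dist x₁ z ^ 2 + dist x₂ z ^ 2) ≤ Real.sqrt ((‖u‖ / c) ^ 2) :=
          Real.sqrt_le_sqrt hkey
      _ = ‖u‖ / c := Real.sqrt_sq (by positivity)
  have hinf : EMetric.infEdist p {x' : WithLp 2 (E × E) | (0:E) ∈ Gmap A B x'} ≤
      ENNReal.ofReal (‖u‖ / c) := by
    calc EMetric.infEdist p {x' : WithLp 2 (E × E) | (0:E) ∈ Gmap A B x'} ≤ edist p q :=
          EMetric.infEdist_le_edist_of_mem hqS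
      _ = ENNReal.ofReal (dist p q) := edist_dist p q
      _ ≤ ENNReal.ofReal (‖u‖ / c) := ENNReal.ofReal_le_ofReal hdistq
  calc ENNReal.ofReal c * EMetric.infEdist p {x' : WithLp 2 (E × E) | (0:E) ∈ Gmap A B x'} ≤
        ENNReal.ofReal c * ENNReal.ofReal (‖u‖ / c) := by
        exact mul_le_mul_right hinf _
    _ = ENNReal.ofReal (c * (‖u‖ / c)) := (ENNReal.ofReal_mul hcpos.le).symm
    _ = ENNReal.ofReal ‖u‖ := by rw [mul_div_cancel₀ _ (ne_of_gt hcpos)]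

/-- Metric subregularity of `G` with constant `c` implies the error bound with `c/(c+2)`. -/
private lemma subreg_to_EB {A B : Set E} {xb : E} (hxb : xb ∈ A ∩ B) {c : ℝ}
    (hc : 0 < c)
    (h : MetrSubregWith (Gmap A B) ((WithLp.equiv 2 (E × E)).symm (xb, xb)) (0 : E) c) :
    ∃ δ > 0, EB A B xb (c / (c + 2)) δ := by
  obtain ⟨δ, hδ, hsub⟩ := h
  refine ⟨δ / 4, by positivity, ?_⟩
  intro x hx
  rw [Metric.mem_ball] at hx
  set m := max (Metric.infDist x A) (Metric.infDist x B) with hm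
  have hmA : Metric.infDist x A ≤ m := le_max_left _ _
  have hmB : Metric.infDist x B ≤ m := le_max_right _ _
  have hm0 : 0 ≤ m := le_max_of_le_left Metric.infDist_nonneg
  have key : ∀ ε : ℝ, 0 < ε →
      c / (c + 2) * Metric.infDist x (A ∩ B) ≤ m + ε := by
    intro ε hε
    set ε₁ := min (ε / 2) (δ / 8) with hε₁
    have hε₁0 : 0 < ε₁ := lt_min (by positivity) (by positivity)
    have hε₁ε : ε₁ ≤ ε / 2 := min_le_left _ _
    have hε₁δ : ε₁ ≤ δ / 8 := min_le_right _ _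
    obtain ⟨a, ha, hda⟩ := (Metric.infDist_lt_iff ⟨xb, hxb.1⟩).1
      (lt_add_of_le_of_pos (le_refl (Metric.infDist x A)) hε₁0)
    obtain ⟨b, hb, hdb⟩ := (Metric.infDist_lt_iff ⟨xb, hxb.2⟩).1
      (lt_add_of_le_of_pos (le_refl (Metric.infDist x B)) hε₁0)
    have hdxA : Metric.infDist x A ≤ dist x xb := Metric.infDist_le_dist_of_mem hxb.1
    have hdxB : Metric.infDist x B ≤ dist x xb := Metric.infDist_le_dist_of_mem hxb.2
    set p : WithLp 2 (E × E) := (WithLp.equiv 2 (E × E)).symm (a, b) with hp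
    have hp1 : p.fst = a := by rw [hp, WithLp.equiv_symm_apply, WithLp.toLp_fst]
    have hp2 : p.snd = b := by rw [hp, WithLp.equiv_symm_apply, WithLp.toLp_snd]
    have hpball : p ∈ Metric.ball ((WithLp.equiv 2 (E × E)).symm (xb, xb)) δ := by
      rw [Metric.mem_ball, WithLp.prod_dist_eq_of_L2, hp1, hp2, WithLp.equiv_symm_apply, WithLp.toLp_fst,
        WithLp.toLp_snd]
      have h1 : dist a xb < δ / 2 + ε₁ := by
        calc dist a xb ≤ dist a x + dist x xb := dist_triangle a x xb
          _ < (Metric.infDist x A + ε₁) + δ / 4 := by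
              rw [dist_comm a x]; exact add_lt_add hda hx
          _ ≤ (dist x xb + ε₁) + δ / 4 := by linarith
          _ < δ / 2 + ε₁ := by linarith
      have h2 : dist b xb < δ / 2 + ε₁ := by
        calc dist b xb ≤ dist b x + dist x xb := dist_triangle b x xb
          _ < (Metric.infDist x B + ε₁) + δ / 4 := by
              rw [dist_comm b x]; exact add_lt_add hdb hx
          _ ≤ (dist x xb + ε₁) + δ / 4 := by linarith
          _ < δ / 2 + ε₁ := by linarith
      have hr : δ / 2 + ε₁ ≤ 5 * δ / 8 := by linarith
      have hsq : dist a xb ^ 2 + dist b xb ^ 2 < δ ^ 2 := by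
        nlinarith [dist_nonneg (x := a) (y := xb), dist_nonneg (x := b) (y := xb)]
      calc Real.sqrt (dist a xb ^ 2 + dist b xb ^ 2) < Real.sqrt (δ ^ 2) :=
            Real.sqrt_lt_sqrt (by positivity) hsq
        _ = δ := Real.sqrt_sq hδ.le
    have hGp : Gmap A B p = {a - b} := by
      ext y
      simp only [Gmap, Set.mem_setOf_eq, WithLp.equiv_apply, WithLp.ofLp_fst, WithLp.ofLp_snd, hp1, hp2,
        Set.mem_singleton_iff]
      exact ⟨fun ⟨_, _, h3⟩ => h3, fun h3 => ⟨ha, hb, h3⟩⟩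
    have hsubp := hsub p hpball
    rw [hGp, EMetric.infEdist, Metric.infEDist_singleton, edist_dist, dist_zero_left] at hsubp
    -- infEdist p S ≤ ofReal (‖a-b‖/c)
    have hIE : EMetric.infEdist p {x' : WithLp 2 (E × E) | (0:E) ∈ Gmap A B x'} ≤
        ENNReal.ofReal (‖a - b‖ / c) := by
      rw [ENNReal.ofReal_div_of_pos hc]
      have hb0 : ENNReal.ofReal c ≠ 0 := by
        simp only [ne_eq, ENNReal.ofReal_eq_zero, not_le]
        exact hc
      rw [ENNReal.le_div_iff_mul_le (Or.inl hb0) (Or.inl ENNReal.ofReal_ne_top), mul_comm]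
      exact hsubp
    have hlt : EMetric.infEdist p {x' : WithLp 2 (E × E) | (0:E) ∈ Gmap A B x'} <
        ENNReal.ofReal (‖a - b‖ / c + ε₁) := by
      apply lt_of_le_of_lt hIE
      rw [ENNReal.ofReal_lt_ofReal_iff (by positivity)]
      linarith
    obtain ⟨q, hqS, hqd⟩ := EMetric.infEdist_lt_iff.1 hlt
    rw [gmap_inv] at hqS
    obtain ⟨hq1, hq2, hq12⟩ := hqS
    set z := q.fst with hzq
    have hzAB : z ∈ A ∩ B := ⟨hq1, by rw [hq12]; exact hq2⟩
    have hqd' : dist p q < ‖a - b‖ / c + ε₁ := by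
      rw [edist_dist] at hqd
      have := (ENNReal.ofReal_lt_ofReal_iff (by positivity)).1 hqd
      exact this
    have hdaz : dist a z < ‖a - b‖ / c + ε₁ := by
      have := dist_fst_le_dist p q
      rw [hp1] at this
      exact lt_of_le_of_lt this hqd'
    have hab : ‖a - b‖ ≤ 2 * m + 2 * ε₁ := by
      have : dist a b ≤ dist a x + dist x b := dist_triangle a x b
      rw [dist_comm a x] at this
      have h1 : dist x a < m + ε₁ := lt_of_lt_of_le hda (by linarith)
      have h2 : dist x b < m + ε₁ := lt_of_lt_of_le hdb (by linarith)
      rw [← dist_eq_norm]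
      linarith
    have hdinf : Metric.infDist x (A ∩ B) ≤ dist x z := Metric.infDist_le_dist_of_mem hzAB
    have hxz : dist x z ≤ dist x a + dist a z := dist_triangle x a z
    have hfinal : Metric.infDist x (A ∩ B) ≤ m + 2 * ε₁ + (2 * m + 2 * ε₁) / c := by
      have h1 : dist x a < m + ε₁ := lt_of_lt_of_le hda (by linarith)
      have h2 : dist a z < (2 * m + 2 * ε₁) / c + ε₁ := by
        apply lt_of_lt_of_le hdaz
        gcongr
      linarith
    -- conclude
    have hc2 : 0 < c + 2 := by linarith
    rw [div_mul_eq_mul_div, div_le_iff₀ hc2]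
    have hdnn : 0 ≤ Metric.infDist x (A ∩ B) := Metric.infDist_nonneg
    have hcc : c * Metric.infDist x (A ∩ B) ≤ c * (m + 2 * ε₁ + (2 * m + 2 * ε₁) / c) := by
      apply mul_le_mul_of_nonneg_left hfinal hc.le
    have hexpand : c * (m + 2 * ε₁ + (2 * m + 2 * ε₁) / c) = c * m + 2 * c * ε₁ + 2 * m + 2 * ε₁ := by
      field_simp; ring
    rw [hexpand] at hcc
    have hε₁ε' : ε₁ ≤ ε / 2 := hε₁ε
    nlinarith
  -- take the limit ε → 0
  exact le_of_forall_pos_le_add fun ε hε => key ε hε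

theorem stmt16 (A B : Set E) (hA : IsClosed A) (hB : IsClosed B) (xb : E) (hxb : xb ∈ A ∩ B) :
    (Subtransversal A B xb ↔ ∃ α > (0 : ℝ),
        MetrSubregWith
          (fun p : WithLp 2 (E × E) =>
            {y : E | (WithLp.equiv 2 (E × E) p).1 ∈ A ∧ (WithLp.equiv 2 (E × E) p).2 ∈ B ∧
              y = (WithLp.equiv 2 (E × E) p).1 - (WithLp.equiv 2 (E × E) p).2})
          ((WithLp.equiv 2 (E × E)).symm (xb, xb)) (0 : E) α) ∧
    (2 / (1 + (srColl A B xb)⁻¹ ^ 2)) ^ ((1 : ℝ) / 2) ≤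
      srMap
        (fun p : WithLp 2 (E × E) =>
          {y : E | (WithLp.equiv 2 (E × E) p).1 ∈ A ∧ (WithLp.equiv 2 (E × E) p).2 ∈ B ∧
            y = (WithLp.equiv 2 (E × E) p).1 - (WithLp.equiv 2 (E × E) p).2})
        ((WithLp.equiv 2 (E × E)).symm (xb, xb)) (0 : E) ∧
    srMap
        (fun p : WithLp 2 (E × E) =>
          {y : E | (WithLp.equiv 2 (E × E) p).1 ∈ A ∧ (WithLp.equiv 2 (E × E) p).2 ∈ B ∧
            y = (WithLp.equiv 2 (E × E) p).1 - (WithLp.equiv 2 (E × E) p).2})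
        ((WithLp.equiv 2 (E × E)).symm (xb, xb)) (0 : E) ≤
      2 / ((srColl A B xb)⁻¹ - 1) := by
  have hF : (fun p : WithLp 2 (E × E) =>
      {y : E | (WithLp.equiv 2 (E × E) p).1 ∈ A ∧ (WithLp.equiv 2 (E × E) p).2 ∈ B ∧
        y = (WithLp.equiv 2 (E × E) p).1 - (WithLp.equiv 2 (E × E) p).2}) = Gmap A B := rfl
  rw [hF]
  have hAB : IsClosed (A ∩ B) := hA.inter hB
  refine ⟨⟨?_, ?_⟩, ?_, ?_⟩
  · -- subtransversal → subregular
    rintro ⟨α, hα, δ, hδ, hsub⟩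
    have hEB := subtransWith_to_EB hxb hα hsub
    have hδ' : (0:ℝ) < min δ (α * δ) := lt_min hδ (by positivity)
    exact ⟨Real.sqrt (2 / (1 + α⁻¹ ^ 2)), Real.sqrt_pos.2 (by positivity),
      EB_to_subreg hAB hxb hα hδ' hEB⟩
  · -- subregular → subtransversal
    rintro ⟨c, hc, hsub⟩
    obtain ⟨δ', hδ', hEB⟩ := subreg_to_EB hxb hc hsub
    exact ⟨c / (c + 2), by positivity, δ', hδ', EB_to_subtransWith hxb (by positivity) hEB⟩
  · -- lower bound
    apply ENNReal.le_of_forall_nnreal_lt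
    intro r hr
    rcases eq_or_lt_of_le (zero_le : (0:NNReal) ≤ r) with hr0 | hr0
    · rw [← hr0]; exact zero_le
    set R : ℝ := (r : ℝ) with hRdef
    have hR : 0 < R := hr0
    set T := (srColl A B xb)⁻¹ ^ 2 with hT
    have hsq : ((2 / (1 + T)) ^ ((1:ℝ)/2)) ^ (2:ℕ) = 2 / (1 + T) := by
      rw [← ENNReal.rpow_natCast _ 2, ← ENNReal.rpow_mul]
      norm_num
    have h2 : ENNReal.ofReal (R ^ 2) < 2 / (1 + T) := by
      have hpow := ENNReal.pow_lt_pow_left (by norm_num : (2:ℕ) ≠ 0) hr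
      rw [hsq] at hpow
      have hcoe : ((r : ℝ≥0∞)) ^ 2 = ENNReal.ofReal (R ^ 2) := by
        rw [← ENNReal.ofReal_coe_nnreal, ← ENNReal.ofReal_pow hR.le]
      rwa [hcoe] at hpow
    have hR2 : R ^ 2 < 2 := by
      have hle : 2 / (1 + T) ≤ 2 := by
        calc (2:ℝ≥0∞) / (1 + T) ≤ 2 / 1 := ENNReal.div_le_div_left le_self_add 2
          _ = 2 := by rw [div_one]
      have := lt_of_lt_of_le h2 hle
      have h2' : (2:ℝ≥0∞) = ENNReal.ofReal 2 := by norm_num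
      rw [h2'] at this
      exact (ENNReal.ofReal_lt_ofReal_iff (by norm_num)).1 this
    set t : ℝ := 2 / R ^ 2 - 1 with ht
    have ht0 : 0 < t := by
      rw [ht, sub_pos, lt_div_iff₀ (by positivity)]
      linarith
    have hsrinv : (srColl A B xb)⁻¹ < ENNReal.ofReal (Real.sqrt t) := by
      by_contra hcon
      push_neg at hcon
      have hTt : ENNReal.ofReal t ≤ T := by
        calc ENNReal.ofReal t = ENNReal.ofReal (Real.sqrt t) ^ 2 := by
              rw [← ENNReal.ofReal_pow (Real.sqrt_nonneg t), Real.sq_sqrt ht0.le]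
          _ ≤ T := by rw [hT]; exact pow_le_pow_left' hcon 2
      have hfinal : 2 / (1 + T) ≤ ENNReal.ofReal (R ^ 2) := by
        calc (2:ℝ≥0∞) / (1 + T) ≤ 2 / (1 + ENNReal.ofReal t) :=
              ENNReal.div_le_div_left (add_le_add_right hTt 1) 2
          _ = ENNReal.ofReal 2 / ENNReal.ofReal (1 + t) := by
              rw [ENNReal.ofReal_add zero_le_one ht0.le, ENNReal.ofReal_one]
              norm_num
          _ = ENNReal.ofReal (2 / (1 + t)) := (ENNReal.ofReal_div_of_pos (by linarith)).symm
          _ = ENNReal.ofReal (R ^ 2) := by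
              congr 1
              rw [ht]
              field_simp
              ring
      exact absurd (lt_of_lt_of_le h2 hfinal) (lt_irrefl _)
    have hsr : ENNReal.ofReal (Real.sqrt t)⁻¹ < srColl A B xb := by
      have h1 : (srColl A B xb)⁻¹ < ((ENNReal.ofReal (Real.sqrt t))⁻¹)⁻¹ := by
        rwa [inv_inv]
      have h2' := ENNReal.inv_lt_inv.1 h1
      rwa [ENNReal.ofReal_inv_of_pos (Real.sqrt_pos.2 ht0)]
    rw [srColl] at hsr
    obtain ⟨α, hα⟩ := lt_iSup_iff.1 hsr
    by_cases hmem : α ∈ {α : ℝ | 0 < α ∧ ∃ δ > 0, SubtransversalWith A B xb α δ}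
    swap
    · rw [iSup_neg hmem] at hα
      exact absurd hα (by simp)
    rw [iSup_pos hmem] at hα
    obtain ⟨hα0, δ, hδ, hsub⟩ := hmem
    have hαgt : (Real.sqrt t)⁻¹ < α := (ENNReal.ofReal_lt_ofReal_iff hα0).1 hα
    -- now show R ≤ √(2/(1+α⁻²)) and that constant is admissible for srMap
    have hEB := subtransWith_to_EB ⟨hxb.1, hxb.2⟩ hα0 hsub
    have hδ' : (0:ℝ) < min δ (α * δ) := lt_min hδ (by positivity)
    have hsubreg := EB_to_subreg hAB ⟨hxb.1, hxb.2⟩ hα0 hδ' hEB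
    set cα : ℝ := Real.sqrt (2 / (1 + α⁻¹ ^ 2)) with hcα
    have hcα0 : 0 < cα := Real.sqrt_pos.2 (by positivity)
    have hcmem : cα ∈ {c : ℝ | 0 < c ∧
        MetrSubregWith (Gmap A B) ((WithLp.equiv 2 (E × E)).symm (xb, xb)) (0:E) c} :=
      ⟨hcα0, hsubreg⟩
    have hle : ENNReal.ofReal cα ≤
        srMap (Gmap A B) ((WithLp.equiv 2 (E × E)).symm (xb, xb)) (0:E) :=
      le_iSup₂ (f := fun (c : ℝ) (_ : c ∈ {c : ℝ | 0 < c ∧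
        MetrSubregWith (Gmap A B) ((WithLp.equiv 2 (E × E)).symm (xb, xb)) (0:E) c}) =>
        ENNReal.ofReal c) cα hcmem
    have hRcα : R ≤ cα := by
      have hsq : 0 < Real.sqrt t := Real.sqrt_pos.2 ht0
      have hαinv : α⁻¹ < Real.sqrt t := by
        rw [inv_eq_one_div, div_lt_iff₀ hsq] at hαgt
        rw [inv_eq_one_div, div_lt_iff₀ hα0]
        nlinarith [hαgt]
      have hαinv2 : α⁻¹ ^ 2 < t := by
        have h0 : 0 ≤ α⁻¹ := by positivity
        have hmul : α⁻¹ * α⁻¹ < Real.sqrt t * Real.sqrt t := by nlinarith [hαinv, h0, hsq]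
        have hts : Real.sqrt t * Real.sqrt t = t := Real.mul_self_sqrt ht0.le
        calc α⁻¹ ^ 2 = α⁻¹ * α⁻¹ := pow_two _
          _ < Real.sqrt t * Real.sqrt t := hmul
          _ = t := hts
      have hgoal : R ^ 2 < 2 / (1 + α⁻¹ ^ 2) := by
        rw [lt_div_iff₀ (by positivity)]
        have h1 : 1 + α⁻¹ ^ 2 < 2 / R ^ 2 := by rw [ht] at hαinv2; linarith
        have h2R : R ^ 2 * (2 / R ^ 2) = 2 := by field_simp
        have hR2' : (0:ℝ) < R ^ 2 := by positivity
        nlinarith [h1, h2R, hR2']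
      rw [hcα]
      exact le_of_lt ((Real.lt_sqrt hR.le).2 hgoal)
    calc (r : ℝ≥0∞) = ENNReal.ofReal R := (ENNReal.ofReal_coe_nnreal).symm
      _ ≤ ENNReal.ofReal cα := ENNReal.ofReal_le_ofReal hRcα
      _ ≤ _ := hle
  · -- upper bound
    rw [srMap]
    apply iSup₂_le
    rintro c ⟨hc0, hsub⟩
    obtain ⟨δ', hδ', hEBc⟩ := subreg_to_EB hxb hc0 hsub
    have hsubt : SubtransversalWith A B xb (c / (c + 2)) δ' :=
      EB_to_subtransWith hxb (by positivity) hEBc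
    have hmemS : c / (c + 2) ∈ {α : ℝ | 0 < α ∧ ∃ δ > 0, SubtransversalWith A B xb α δ} :=
      ⟨by positivity, δ', hδ', hsubt⟩
    have hsr : ENNReal.ofReal (c / (c + 2)) ≤ srColl A B xb :=
      le_iSup₂ (f := fun (α : ℝ) (_ : α ∈ {α : ℝ | 0 < α ∧ ∃ δ > 0,
        SubtransversalWith A B xb α δ}) => ENNReal.ofReal α) (c / (c + 2)) hmemS
    have hinv : (srColl A B xb)⁻¹ ≤ ENNReal.ofReal ((c + 2) / c) := by
      calc (srColl A B xb)⁻¹ ≤ (ENNReal.ofReal (c / (c + 2)))⁻¹ := ENNReal.inv_le_inv' hsr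
        _ = ENNReal.ofReal ((c / (c + 2))⁻¹) := by
            rw [ENNReal.ofReal_inv_of_pos (by positivity)]
        _ = ENNReal.ofReal ((c + 2) / c) := by rw [inv_div]
    have hsub1 : (srColl A B xb)⁻¹ - 1 ≤ ENNReal.ofReal (2 / c) := by
      calc (srColl A B xb)⁻¹ - 1 ≤ ENNReal.ofReal ((c + 2) / c) - 1 :=
            tsub_le_tsub_right hinv 1
        _ = ENNReal.ofReal ((c + 2) / c) - ENNReal.ofReal 1 := by rw [ENNReal.ofReal_one]
        _ = ENNReal.ofReal ((c + 2) / c - 1) := (ENNReal.ofReal_sub _ zero_le_one).symm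
        _ = ENNReal.ofReal (2 / c) := by
            congr 1
            field_simp
            ring
    calc ENNReal.ofReal c = 2 / ENNReal.ofReal (2 / c) := by
          rw [show (2:ℝ≥0∞) = ENNReal.ofReal 2 by norm_num,
            ← ENNReal.ofReal_div_of_pos (by positivity),
            show (2:ℝ) / (2 / c) = c by field_simp]
      _ ≤ 2 / ((srColl A B xb)⁻¹ - 1) := ENNReal.div_le_div_left hsub1 2

end Statements
end

section
/- Let A and B be closed subsets of a Euclidean space E, let x̄ ∈ A ∩ B, and define the set-valued mapping F : E ⇉ E × E by F(x) = (A − x) × (B − x), where E × E carries the maximum norm ‖(u₁,u₂)‖ = max{‖u₁‖, ‖u₂‖}. Then {A,B} is transversal at x̄ if and only if F is metrically regular at x̄ for (0,0); moreover rg[A,B](x̄) = r[F](x̄|(0,0)). -/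
open Metric Set Pointwise Filter ENNReal
open scoped RealInnerProductSpace

section Statements

variable {E : Type*} [NormedAddCommGroup E] [InnerProductSpace ℝ E] [FiniteDimensional ℝ E]

lemma mem_im_iff (A : Set E) (x' u : E) : u ∈ (· - x') '' A ↔ x' + u ∈ A := by
  constructor
  · rintro ⟨a, ha, rfl⟩; simpa using ha
  · intro h; exact ⟨x' + u, h, add_sub_cancel_left x' u⟩

lemma ofReal_m_le (A B : Set E) (x : E) (y : E × E) :
    ENNReal.ofReal (max (infDist (x + y.1) A) (infDist (x + y.2) B)) ≤
      EMetric.infEdist y (((· - x) '' A) ×ˢ ((· - x) '' B)) := by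
  refine EMetric.le_infEdist.mpr ?_
  rintro ⟨z₁, z₂⟩ ⟨⟨a, ha, rfl⟩, ⟨b, hb, rfl⟩⟩
  rw [Prod.edist_eq]
  have e1 : ENNReal.ofReal (infDist (x + y.1) A) ≤ edist y.1 (a - x) := by
    rw [edist_dist]
    refine ENNReal.ofReal_le_ofReal ?_
    have : dist y.1 (a - x) = dist (x + y.1) a := by
      rw [dist_eq_norm, dist_eq_norm]; congr 1; abel
    rw [this]
    exact infDist_le_dist_of_mem ha
  have e2 : ENNReal.ofReal (infDist (x + y.2) B) ≤ edist y.2 (b - x) := by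
    rw [edist_dist]
    refine ENNReal.ofReal_le_ofReal ?_
    have : dist y.2 (b - x) = dist (x + y.2) b := by
      rw [dist_eq_norm, dist_eq_norm]; congr 1; abel
    rw [this]
    exact infDist_le_dist_of_mem hb
  rcases le_total (infDist (x + y.1) A) (infDist (x + y.2) B) with h | h
  · rw [max_eq_right h]; exact e2.trans (le_max_right _ _)
  · rw [max_eq_left h]; exact e1.trans (le_max_left _ _)

lemma key (A B : Set E) (hA : IsClosed A) (hB : IsClosed B) (xb : E)
    (hxA : xb ∈ A) (hxB : xb ∈ B) (α : ℝ) (hα : 0 < α) :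
    (∃ δ > 0, TransversalWith A B xb α δ) ↔
      MetrRegWith (fun x : E => ((· - x) '' A) ×ˢ ((· - x) '' B)) xb ((0 : E), (0 : E)) α := by
  constructor
  · rintro ⟨δ, hδ, hT⟩
    refine ⟨min (δ / 4) (α * δ / 2), by positivity, ?_⟩
    intro x hx y hy
    have hx' : dist x xb < min (δ / 4) (α * δ / 2) := hx
    have hy1 : ‖y.1‖ < min (δ / 4) (α * δ / 2) := by
      have := hy
      rw [mem_ball, Prod.dist_eq] at this
      calc ‖y.1‖ = dist y.1 (0 : E) := by rw [dist_zero_right]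
        _ ≤ max (dist y.1 (0:E)) (dist y.2 (0:E)) := le_max_left _ _
        _ < _ := this
    have hy2 : ‖y.2‖ < min (δ / 4) (α * δ / 2) := by
      have := hy
      rw [mem_ball, Prod.dist_eq] at this
      calc ‖y.2‖ = dist y.2 (0 : E) := by rw [dist_zero_right]
        _ ≤ max (dist y.1 (0:E)) (dist y.2 (0:E)) := le_max_right _ _
        _ < _ := this
    obtain ⟨a, haA, hda⟩ := hA.exists_infDist_eq_dist ⟨xb, hxA⟩ (x + y.1)
    obtain ⟨b, hbB, hdb⟩ := hB.exists_infDist_eq_dist ⟨xb, hxB⟩ (x + y.2)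
    set d₁ := infDist (x + y.1) A with hd₁
    set d₂ := infDist (x + y.2) B with hd₂
    set m := max d₁ d₂ with hmdef
    have hm0 : 0 ≤ m := le_trans infDist_nonneg (le_max_left _ _)
    have hd1b : d₁ < 2 * min (δ / 4) (α * δ / 2) := by
      calc d₁ ≤ dist (x + y.1) xb := infDist_le_dist_of_mem hxA
        _ ≤ dist x xb + ‖y.1‖ := by
            rw [dist_eq_norm, dist_eq_norm]
            calc ‖x + y.1 - xb‖ = ‖(x - xb) + y.1‖ := by congr 1; abel
              _ ≤ ‖x - xb‖ + ‖y.1‖ := norm_add_le _ _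
        _ < 2 * min (δ / 4) (α * δ / 2) := by linarith
    have hd2b : d₂ < 2 * min (δ / 4) (α * δ / 2) := by
      calc d₂ ≤ dist (x + y.2) xb := infDist_le_dist_of_mem hxB
        _ ≤ dist x xb + ‖y.2‖ := by
            rw [dist_eq_norm, dist_eq_norm]
            calc ‖x + y.2 - xb‖ = ‖(x - xb) + y.2‖ := by congr 1; abel
              _ ≤ ‖x - xb‖ + ‖y.2‖ := norm_add_le _ _
        _ < 2 * min (δ / 4) (α * δ / 2) := by linarith
    have hmb : m < 2 * min (δ / 4) (α * δ / 2) := max_lt hd1b hd2b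
    have hmαδ : m / α < δ := by
      rw [div_lt_iff₀ hα]
      have : 2 * min (δ / 4) (α * δ / 2) ≤ α * δ := by
        have := min_le_right (δ / 4) (α * δ / 2)
        linarith
      linarith [hmb, this]
    -- key claim
    have hkey : ∀ ρ : ℝ, m / α < ρ → ρ < δ →
        EMetric.infEdist x {x' : E | y ∈ ((· - x') '' A) ×ˢ ((· - x') '' B)} ≤
          ENNReal.ofReal ρ := by
      intro ρ hρ₁ hρ₂
      have hρ0 : 0 < ρ := lt_of_le_of_lt (div_nonneg hm0 hα.le) hρ₁
      have hmlt : m < α * ρ := by rwa [div_lt_iff₀ hα, mul_comm] at hρ₁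
      have haball : a ∈ Metric.ball xb δ := by
        rw [mem_ball]
        have h1 : dist a (x + y.1) = d₁ := by rw [hda, dist_comm]
        calc dist a xb ≤ dist a (x + y.1) + dist (x + y.1) xb := dist_triangle _ _ _
          _ ≤ d₁ + (dist x xb + ‖y.1‖) := by
              refine add_le_add (le_of_eq h1) ?_
              rw [dist_eq_norm, dist_eq_norm]
              calc ‖x + y.1 - xb‖ = ‖(x - xb) + y.1‖ := by congr 1; abel
                _ ≤ ‖x - xb‖ + ‖y.1‖ := norm_add_le _ _
          _ < 2 * min (δ / 4) (α * δ / 2) + 2 * min (δ / 4) (α * δ / 2) := by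
              linarith [hd1b]
          _ ≤ δ := by
              have := min_le_left (δ / 4) (α * δ / 2)
              linarith
      have hbball : b ∈ Metric.ball xb δ := by
        rw [mem_ball]
        have h1 : dist b (x + y.2) = d₂ := by rw [hdb, dist_comm]
        calc dist b xb ≤ dist b (x + y.2) + dist (x + y.2) xb := dist_triangle _ _ _
          _ ≤ d₂ + (dist x xb + ‖y.2‖) := by
              refine add_le_add (le_of_eq h1) ?_
              rw [dist_eq_norm, dist_eq_norm]
              calc ‖x + y.2 - xb‖ = ‖(x - xb) + y.2‖ := by congr 1; abel
                _ ≤ ‖x - xb‖ + ‖y.2‖ := norm_add_le _ _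
          _ < 2 * min (δ / 4) (α * δ / 2) + 2 * min (δ / 4) (α * δ / 2) := by
              linarith [hd2b]
          _ ≤ δ := by
              have := min_le_left (δ / 4) (α * δ / 2)
              linarith
      have hnorm : max ‖x + y.1 - a‖ ‖x + y.2 - b‖ < α * ρ := by
        have h1 : ‖x + y.1 - a‖ = d₁ := by rw [hda, dist_eq_norm]
        have h2 : ‖x + y.2 - b‖ = d₂ := by rw [hdb, dist_eq_norm]
        rw [h1, h2]; exact lt_of_le_of_lt le_rfl (by rw [← hmdef] at *; exact hmlt)
      obtain ⟨w, ⟨⟨hw1, hw2⟩, hwball⟩⟩ :=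
        hT ρ ⟨hρ0, hρ₂⟩ a ⟨haA, haball⟩ b ⟨hbB, hbball⟩ (x + y.1 - a) (x + y.2 - b) hnorm
      obtain ⟨a', ha', hae⟩ := hw1
      obtain ⟨b', hb', hbe⟩ := hw2
      have hmemS : x + w ∈ {x' : E | y ∈ ((· - x') '' A) ×ˢ ((· - x') '' B)} := by
        refine ⟨(mem_im_iff A _ _).mpr ?_, (mem_im_iff B _ _).mpr ?_⟩
        · have : a' = x + w + y.1 := by
            have := hae; simp only at this; linear_combination (norm := abel_nf) this
          rwa [this] at ha'
        · have : b' = x + w + y.2 := by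
            have := hbe; simp only at this; linear_combination (norm := abel_nf) this
          rwa [this] at hb'
      calc EMetric.infEdist x {x' : E | y ∈ ((· - x') '' A) ×ˢ ((· - x') '' B)}
          ≤ edist x (x + w) := EMetric.infEdist_le_edist_of_mem hmemS
        _ ≤ ENNReal.ofReal ρ := by
            rw [edist_dist]
            refine ENNReal.ofReal_le_ofReal ?_
            have : dist x (x + w) = ‖w‖ := by
              rw [dist_eq_norm]
              calc ‖x - (x + w)‖ = ‖-w‖ := by congr 1; abel
                _ = ‖w‖ := norm_neg _
            rw [this]
            rw [mem_ball, dist_zero_right] at hwball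
            exact hwball.le
    -- conclude via epsilon argument
    refine ENNReal.le_of_forall_pos_le_add fun ε hε _ => ?_
    set ρ := m / α + min ((ε : ℝ) / (2 * α)) ((δ - m / α) / 2) with hρdef
    have hmin0 : 0 < min ((ε : ℝ) / (2 * α)) ((δ - m / α) / 2) := by
      refine lt_min (by positivity) (by linarith)
    have hρ₁ : m / α < ρ := by rw [hρdef]; linarith
    have hρ₂ : ρ < δ := by
      have h := min_le_right ((ε : ℝ) / (2 * α)) ((δ - m / α) / 2)
      rw [hρdef]; linarith
    have hαρ : α * ρ ≤ m + ε := by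
      have h := min_le_left ((ε : ℝ) / (2 * α)) ((δ - m / α) / 2)
      have : α * ρ = m + α * min ((ε : ℝ) / (2 * α)) ((δ - m / α) / 2) := by
        rw [hρdef]; field_simp
      rw [this]
      have : α * min ((ε : ℝ) / (2 * α)) ((δ - m / α) / 2) ≤ α * ((ε : ℝ) / (2 * α)) :=
        mul_le_mul_of_nonneg_left h hα.le
      have hεhalf : α * ((ε : ℝ) / (2 * α)) = (ε : ℝ) / 2 := by field_simp
      nlinarith [ε.coe_nonneg]
    calc ENNReal.ofReal α * EMetric.infEdist x {x' : E | y ∈ ((· - x') '' A) ×ˢ ((· - x') '' B)}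
        ≤ ENNReal.ofReal α * ENNReal.ofReal ρ :=
          mul_le_mul_right (hkey ρ hρ₁ hρ₂) _
      _ = ENNReal.ofReal (α * ρ) := (ENNReal.ofReal_mul hα.le).symm
      _ ≤ ENNReal.ofReal (m + ε) := ENNReal.ofReal_le_ofReal hαρ
      _ = ENNReal.ofReal m + ENNReal.ofReal ε := ENNReal.ofReal_add hm0 ε.coe_nonneg
      _ ≤ EMetric.infEdist y (((· - x) '' A) ×ˢ ((· - x) '' B)) + ε := by
          refine add_le_add (ofReal_m_le A B x y) ?_
          rw [ENNReal.ofReal_coe_nnreal]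
  · rintro ⟨δ, hδ, hR⟩
    refine ⟨δ / (1 + α), by positivity, ?_⟩
    rintro ρ ⟨hρ0, hρδ⟩ a ⟨haA, haball⟩ b ⟨hbB, hbball⟩ x₁ x₂ hx12
    set y : E × E := (a + x₁ - xb, b + x₂ - xb) with hydef
    have hyball : y ∈ Metric.ball ((0 : E), (0 : E)) δ := by
      rw [mem_ball, Prod.dist_eq]
      have h1 : dist y.1 (0 : E) < δ := by
        rw [dist_zero_right]
        calc ‖a + x₁ - xb‖ = ‖(a - xb) + x₁‖ := by congr 1; abel
          _ ≤ ‖a - xb‖ + ‖x₁‖ := norm_add_le _ _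
          _ < δ / (1 + α) + α * ρ := by
              refine add_lt_add ?_ (lt_of_le_of_lt (le_max_left _ _) hx12)
              rw [mem_ball, dist_eq_norm] at haball; exact haball
          _ ≤ δ / (1 + α) + α * (δ / (1 + α)) := by nlinarith
          _ = δ := by field_simp
      have h2 : dist y.2 (0 : E) < δ := by
        rw [dist_zero_right]
        calc ‖b + x₂ - xb‖ = ‖(b - xb) + x₂‖ := by congr 1; abel
          _ ≤ ‖b - xb‖ + ‖x₂‖ := norm_add_le _ _
          _ < δ / (1 + α) + α * ρ := by
              refine add_lt_add ?_ (lt_of_le_of_lt (le_max_right _ _) hx12)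
              rw [mem_ball, dist_eq_norm] at hbball; exact hbball
          _ ≤ δ / (1 + α) + α * (δ / (1 + α)) := by nlinarith
          _ = δ := by field_simp
      exact max_lt h1 h2
    have hreg := hR xb (mem_ball_self hδ) y hyball
    have hrhs : EMetric.infEdist y (((· - xb) '' A) ×ˢ ((· - xb) '' B)) <
        ENNReal.ofReal (α * ρ) := by
      have hmem : ((a - xb, b - xb) : E × E) ∈ (((· - xb) '' A) ×ˢ ((· - xb) '' B)) :=
        ⟨⟨a, haA, rfl⟩, ⟨b, hbB, rfl⟩⟩
      calc EMetric.infEdist y (((· - xb) '' A) ×ˢ ((· - xb) '' B))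
          ≤ edist y (a - xb, b - xb) := EMetric.infEdist_le_edist_of_mem hmem
        _ = ENNReal.ofReal (max ‖x₁‖ ‖x₂‖) := by
            rw [Prod.edist_eq, edist_dist, edist_dist]
            have e1 : dist y.1 (a - xb) = ‖x₁‖ := by
              rw [dist_eq_norm]; congr 1; show a + x₁ - xb - (a - xb) = x₁; abel
            have e2 : dist y.2 (b - xb) = ‖x₂‖ := by
              rw [dist_eq_norm]; congr 1; show b + x₂ - xb - (b - xb) = x₂; abel
            rw [e1, e2]
            rcases le_total ‖x₁‖ ‖x₂‖ with h | h
            · rw [max_eq_right h, max_eq_right (ENNReal.ofReal_le_ofReal h)]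
            · rw [max_eq_left h, max_eq_left (ENNReal.ofReal_le_ofReal h)]
        _ < ENNReal.ofReal (α * ρ) := by
            rw [ENNReal.ofReal_lt_ofReal_iff (by positivity)]; exact hx12
    have hlt : EMetric.infEdist xb {x' : E | y ∈ ((· - x') '' A) ×ˢ ((· - x') '' B)} <
        ENNReal.ofReal ρ := by
      have h1 : ENNReal.ofReal α *
          EMetric.infEdist xb {x' : E | y ∈ ((· - x') '' A) ×ˢ ((· - x') '' B)} <
          ENNReal.ofReal α * ENNReal.ofReal ρ := by
        rw [← ENNReal.ofReal_mul hα.le]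
        exact lt_of_le_of_lt hreg hrhs
      exact (ENNReal.mul_lt_mul_iff_right (by simp [hα]) ENNReal.ofReal_ne_top).mp h1
    obtain ⟨s, hsS, hs⟩ := EMetric.infEdist_lt_iff.mp hlt
    obtain ⟨hs1, hs2⟩ : s + y.1 ∈ A ∧ s + y.2 ∈ B :=
      ⟨(mem_im_iff A _ _).mp hsS.1, (mem_im_iff B _ _).mp hsS.2⟩
    refine ⟨s - xb, ⟨⟨⟨s + y.1, hs1, by show s + (a + x₁ - xb) - a - x₁ = s - xb; abel⟩,
      ⟨s + y.2, hs2, by show s + (b + x₂ - xb) - b - x₂ = s - xb; abel⟩⟩, ?_⟩⟩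
    rw [mem_ball, dist_zero_right]
    have : ‖s - xb‖ = dist xb s := by rw [dist_eq_norm]; rw [← norm_neg]; congr 1; abel
    rw [this]
    exact edist_lt_ofReal.mp hs

theorem stmt17 (A B : Set E) (hA : IsClosed A) (hB : IsClosed B) (xb : E) (hxb : xb ∈ A ∩ B) :
    (Transversal A B xb ↔ ∃ α > (0 : ℝ),
        MetrRegWith (fun x : E => ((· - x) '' A) ×ˢ ((· - x) '' B)) xb ((0 : E), (0 : E)) α) ∧
    rgColl A B xb =
      rMap (fun x : E => ((· - x) '' A) ×ˢ ((· - x) '' B)) xb ((0 : E), (0 : E)) := by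
  obtain ⟨hxA, hxB⟩ := hxb
  have hk := fun (α : ℝ) (hα : 0 < α) => key A B hA hB xb hxA hxB α hα
  constructor
  · constructor
    · rintro ⟨α, hα, hT⟩; exact ⟨α, hα, (hk α hα).mp hT⟩
    · rintro ⟨α, hα, hR⟩; exact ⟨α, hα, (hk α hα).mpr hR⟩
  · have hset : {α : ℝ | 0 < α ∧ ∃ δ > 0, TransversalWith A B xb α δ}
        = {α : ℝ | 0 < α ∧ MetrRegWith
            (fun x : E => ((· - x) '' A) ×ˢ ((· - x) '' B)) xb ((0 : E), (0 : E)) α} := by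
      ext α
      exact and_congr_right fun hα => hk α hα
    simp only [rgColl, rMap]
    rw [hset]

end Statements
end

section
/- Let A and B be closed subsets of a Euclidean space E and x̄ ∈ A ∩ B. If the collection {A,B} is transversal at x̄, then {A,B} is subtransversal at x̄, and moreover rg[A,B](x̄) ≤ sr[A,B](x̄). -/
open Metric Set Pointwise Filter ENNReal
open scoped RealInnerProductSpace

section Statements

variable {E : Type*} [NormedAddCommGroup E] [InnerProductSpace ℝ E] [FiniteDimensional ℝ E]

lemma transversalWith_imp_subtransversalWith (A B : Set E) (xb : E) {α δ : ℝ}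
    (hα : 0 < α) (hδ : 0 < δ) (h : TransversalWith A B xb α δ) :
    SubtransversalWith A B xb α (δ / (1 + α)) := by
  have h1α : (1 : ℝ) < 1 + α := by linarith
  have hδ' : 0 < δ / (1 + α) := div_pos hδ (by linarith)
  have hδ'δ : δ / (1 + α) < δ := by
    rw [div_lt_iff₀ (by linarith)]; nlinarith
  intro ρ hρ u hu
  obtain ⟨⟨huA, huB⟩, huball⟩ := hu
  obtain ⟨a, ha, p, hp, hap⟩ := huA
  obtain ⟨b, hb, q, hq, hbq⟩ := huB
  simp only [mem_ball, dist_zero_right] at hp hq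
  have hρδ : ρ ∈ Set.Ioo (0 : ℝ) δ := ⟨hρ.1, hρ.2.trans hδ'δ⟩
  have hρδ' : ρ < δ / (1 + α) := hρ.2
  have haball : a ∈ Metric.ball xb δ := by
    rw [mem_ball, dist_eq_norm]
    have : a - xb = (u - xb) - p := by rw [← hap]; beta_reduce; abel
    rw [this]
    calc ‖(u - xb) - p‖ ≤ ‖u - xb‖ + ‖p‖ := norm_sub_le _ _
      _ < δ / (1 + α) + α * ρ := by
          refine add_lt_add ?_ hp
          rw [← dist_eq_norm]; exact huball
      _ ≤ δ / (1 + α) + α * (δ / (1 + α)) := by nlinarith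
      _ = δ := by field_simp
  have hbball : b ∈ Metric.ball xb δ := by
    rw [mem_ball, dist_eq_norm]
    have : b - xb = (u - xb) - q := by rw [← hbq]; beta_reduce; abel
    rw [this]
    calc ‖(u - xb) - q‖ ≤ ‖u - xb‖ + ‖q‖ := norm_sub_le _ _
      _ < δ / (1 + α) + α * ρ := by
          refine add_lt_add ?_ hq
          rw [← dist_eq_norm]; exact huball
      _ ≤ δ / (1 + α) + α * (δ / (1 + α)) := by nlinarith
      _ = δ := by field_simp
  obtain ⟨w, ⟨⟨z₁, hz₁A, hz₁⟩, z₂, hz₂B, hz₂⟩, hwball⟩ :=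
    h ρ hρδ a ⟨ha, haball⟩ b ⟨hb, hbball⟩ p q (max_lt hp hq)
  -- z₁ - a - p = w, z₂ - b - q = w, a + p = u = b + q
  have hap' : a + p = u := hap
  have hbq' : b + q = u := hbq
  have hz₁' : z₁ - a - p = w := hz₁
  have hz₂' : z₂ - b - q = w := hz₂
  have hz₁u : z₁ = u + w := by rw [← hap', ← hz₁']; abel
  have hz₂u : z₂ = u + w := by rw [← hbq', ← hz₂']; abel
  refine ⟨u + w, ⟨hz₁u ▸ hz₁A, hz₂u ▸ hz₂B⟩, -w, ?_, by show u + w + -w = u; abel⟩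
  simpa [mem_ball, dist_zero_right] using (mem_ball_zero_iff.mp hwball)

theorem stmt18 (A B : Set E) (hA : IsClosed A) (hB : IsClosed B) (xb : E) (hxb : xb ∈ A ∩ B) :
    (Transversal A B xb → Subtransversal A B xb) ∧ rgColl A B xb ≤ srColl A B xb := by
  have key : ∀ α, (0 < α ∧ ∃ δ > 0, TransversalWith A B xb α δ) →
      (0 < α ∧ ∃ δ > 0, SubtransversalWith A B xb α δ) := by
    rintro α ⟨hα, δ, hδ, h⟩
    exact ⟨hα, δ / (1 + α), div_pos hδ (by linarith),
      transversalWith_imp_subtransversalWith A B xb hα hδ h⟩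
  constructor
  · rintro ⟨α, hα, δ, hδ, h⟩
    obtain ⟨hα', δ', hδ', h'⟩ := key α ⟨hα, δ, hδ, h⟩
    exact ⟨α, hα', δ', hδ', h'⟩
  · exact iSup_le fun α => iSup_le fun hmem => le_iSup₂ (f := fun α _ => ENNReal.ofReal α) α
      (key α hmem)

end Statements
end
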